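/- Let H = (V, E, w) be a finite weighted hypergraph with nonnegative hyperedge weights, let s be a source vertex, and let L = {e_1, e_2, …, e_l} be a shortest hyperpath from s ∈ e_1 to a vertex z ∈ e_l. Then for every index 1 ≤ i ≤ l−1 and any two vertices u, v ∈ e_i ∩ e_{i+1}, the shortest-hyperpath distances from s satisfy d[u] = d[v]. -/

import Mathlib

open scoped ENNReal NNReal

variable {V : Type*}

/-- A hyperpath from `u` to `v` in the hypergraph with hyperedge set `E`:
a nonempty list of hyperedges, the first containing `u`, the last containing `v`,
with consecutive hyperedges intersecting. -/
def IsHyperpath [DecidableEq V] (E : Finset (Finset V)) (u v : V)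
    (L : List (Finset V)) : Prop :=
  (∀ e ∈ L, e ∈ E) ∧ L.Chain' (fun a b => (a ∩ b).Nonempty) ∧
    ∃ h : L ≠ [], u ∈ L.head h ∧ v ∈ L.getLast h

/-- The weight of a hyperpath: the sum of the weights of its hyperedges. -/
def hweight (w : Finset V → ℝ≥0) (L : List (Finset V)) : ℝ≥0 :=
  (L.map w).sum

/-- Shortest-hyperpath distance from `s` to `v` (`∞` when no hyperpath exists). -/
noncomputable def hdist [DecidableEq V] (E : Finset (Finset V))
    (w : Finset V → ℝ≥0) (s v : V) : ℝ≥0∞ :=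
  ⨅ L : {L : List (Finset V) // IsHyperpath E s v L}, (hweight w L.1 : ℝ≥0∞)

/-! If `u, v ∈ e_i ∩ e_{i+1}`, the prefix `e_1, …, e_i` of `L` is a hyperpath to `v`, while any
hyperpath to `u` followed by the suffix `e_{i+1}, …, e_l` is a hyperpath to `z`. Minimality of `L`
thus gives `d[v] ≤ w(e_1) + ⋯ + w(e_i) ≤ d[u]`, and the roles of `u` and `v` are symmetric. -/

namespace IsHyperpath

variable [DecidableEq V] {E : Finset (Finset V)}

theorem append {s x t : V} {P Q : List (Finset V)} (hP : IsHyperpath E s x P)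
    (hQ : IsHyperpath E x t Q) : IsHyperpath E s t (P ++ Q) := by
  obtain ⟨hPE, hPchain, hPne, hPs, hPx⟩ := hP
  obtain ⟨hQE, hQchain, hQne, hQx, hQt⟩ := hQ
  refine ⟨?_, ?_, List.append_ne_nil_of_left_ne_nil hPne Q, ?_, ?_⟩
  · simpa only [List.mem_append] using fun e he => he.elim (hPE e) (hQE e)
  · refine hPchain.append hQchain fun a ha b hb => ?_
    rw [List.getLast?_eq_some_getLast hPne, Option.mem_some_iff] at ha
    rw [List.head?_eq_some_head hQne, Option.mem_some_iff] at hb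
    exact ⟨x, Finset.mem_inter.2 ⟨ha ▸ hPx, hb ▸ hQx⟩⟩
  · rwa [List.head_append_of_ne_nil hPne]
  · rwa [List.getLast_append_right hQne]

theorem take {s z v : V} {L : List (Finset V)} (hL : IsHyperpath E s z L) {i : ℕ}
    (hi : i < L.length) (hv : v ∈ L[i]) : IsHyperpath E s v (L.take (i + 1)) := by
  obtain ⟨hLE, hchain, hne, hs, -⟩ := hL
  refine ⟨fun e he => hLE e (List.mem_of_mem_take he), hchain.prefix (L.take_prefix _),
    by simp [hne], ?_, ?_⟩
  · rwa [List.head_take]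
  · rwa [List.getLast_take, Nat.add_sub_cancel, List.getElem?_eq_getElem hi]

theorem drop {s z u : V} {L : List (Finset V)} (hL : IsHyperpath E s z L) {i : ℕ}
    (hi : i < L.length) (hu : u ∈ L[i]) : IsHyperpath E u z (L.drop i) := by
  obtain ⟨hLE, hchain, hne, -, hz⟩ := hL
  refine ⟨fun e he => hLE e (List.mem_of_mem_drop he), hchain.suffix (L.drop_suffix _),
    by simpa using hi, ?_, ?_⟩
  · rwa [List.head_drop]
  · rwa [List.getLast_drop]

end IsHyperpath

theorem hweight_append (w : Finset V → ℝ≥0) (P Q : List (Finset V)) :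
    hweight w (P ++ Q) = hweight w P + hweight w Q := by
  simp only [hweight, List.map_append, List.sum_append]

section

variable [DecidableEq V] {E : Finset (Finset V)} {w : Finset V → ℝ≥0}

theorem hdist_le_hweight {s v : V} {L : List (Finset V)} (hL : IsHyperpath E s v L) :
    hdist E w s v ≤ hweight w L :=
  iInf_le (fun P : {P // IsHyperpath E s v P} => (hweight w P.1 : ℝ≥0∞)) ⟨L, hL⟩

theorem hweight_take_le_hdist {s z u : V} {L : List (Finset V)} (hL : IsHyperpath E s z L)
    (hmin : ∀ L', IsHyperpath E s z L' → hweight w L ≤ hweight w L') {j : ℕ}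
    (hj : j < L.length) (hu : u ∈ L[j]) : hweight w (L.take j) ≤ hdist E w s u := by
  refine le_iInf fun ⟨P, hP⟩ => ENNReal.coe_le_coe.2 ?_
  have hswap := hmin _ (hP.append (hL.drop hj hu))
  have hsplit := hweight_append w (L.take j) (L.drop j)
  rw [L.take_append_drop] at hsplit
  rw [hsplit, hweight_append] at hswap
  exact le_of_add_le_add_right hswap

theorem hdist_le_of_mem_of_mem_succ {s z u v : V} {L : List (Finset V)}
    (hL : IsHyperpath E s z L)
    (hmin : ∀ L', IsHyperpath E s z L' → hweight w L ≤ hweight w L') {i : ℕ}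
    (hi : i + 1 < L.length) (hv : v ∈ L[i]'(Nat.lt_of_succ_lt hi)) (hu : u ∈ L[i + 1]) :
    hdist E w s v ≤ hdist E w s u :=
  (hdist_le_hweight (hL.take (Nat.lt_of_succ_lt hi) hv)).trans (hweight_take_le_hdist hL hmin hi hu)

end

/-- In a finite weighted hypergraph with nonnegative hyperedge
weights, if `L = (e_1, …, e_l)` is a shortest hyperpath from the source `s` to
`z`, then for every `1 ≤ i ≤ l − 1` (here `0`-indexed: `i + 1 < L.length`) and
any two vertices `u, v ∈ e_i ∩ e_{i+1}`, the shortest-hyperpath distances from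
`s` satisfy `d[u] = d[v]`. -/
theorem shortest_hyperpath_intersection_eq_dist [DecidableEq V]
    (E : Finset (Finset V))
    (w : Finset V → ℝ≥0) (s z : V) (L : List (Finset V))
    (hL : IsHyperpath E s z L)
    (hmin : ∀ L', IsHyperpath E s z L' → hweight w L ≤ hweight w L')
    (i : ℕ) (hi : i + 1 < L.length) (u v : V)
    (hu : u ∈ L[i]'(by omega) ∩ L[i + 1]'hi)
    (hv : v ∈ L[i]'(by omega) ∩ L[i + 1]'hi) :
    hdist E w s u = hdist E w s v := by
  rw [Finset.mem_inter] at hu hv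
  exact le_antisymm (hdist_le_of_mem_of_mem_succ hL hmin hi hu.1 hv.2)
    (hdist_le_of_mem_of_mem_succ hL hmin hi hv.1 hu.2)
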